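/- Let ν be a probability measure, q : M → ℝ measurable with ∫ q dν = 0, and h its decreasing rearrangement on (0,1) with H(a) := ∫_0^a h satisfying H(0)=0, H(1)=0, H concave, and H(a) ≤ F(a) := Φ'(Φ^{-1}(a)) for all a ∈ (0,1). Then ∫_0^1 h(a)² da ≤ 1/2, and consequently ∫_M q² dν ≤ 1/2. -/

import Mathlib

/-!
Let `g := -Φ⁻¹ / 2`, a rescaled quantile function of the centred Gaussian of variance `2`.
Since `φ' = -(y / 2) φ` for its density `φ = Φ'`, the primitive of `g` is `∫₀ᵘ g = φ (Φ⁻¹ u) = F u`,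
so `H ≤ F` says that the primitive of `h` lies below that of `g`, both vanishing at `0` and `1`.
For a non-increasing `h` the set `{h > t}` is an initial interval `(0, u)`, whence
`∫ (h - t)₊ = H u - t u ≤ ∫₀ᵘ (g - t) ≤ ∫ (g - t)₊` for every `t`, and similarly for negative parts.
Integrating in `t` through `x² = 2 ∫₀^∞ (|x| - t)₊ dt` gives
`∫ h² ≤ ∫ g² = Var N(0, 2) / 4 = 1 / 2`.
-/

open MeasureTheory ProbabilityTheory Set Filter Topology
open scoped NNReal

theorem hasDerivAt_setIntegral_Iic {E : Type*} [NormedAddCommGroup E] [NormedSpace ℝ E]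
    [CompleteSpace E] {f : ℝ → E} (hf : Integrable f) (hc : Continuous f) (x : ℝ) :
    HasDerivAt (fun x => ∫ y in Iic x, f y) (f x) x := by
  have hsplit : (fun x => ∫ y in Iic x, f y) = fun x => (∫ y in Iic 0, f y) + ∫ y in 0..x, f y := by
    funext x
    rw [← intervalIntegral.integral_Iic_sub_Iic hf.integrableOn hf.integrableOn, add_sub_cancel]
  rw [hsplit]
  exact (hc.integral_hasStrictDerivAt 0 x).hasDerivAt.const_add _

section Quantile

variable {Φ φ : ℝ → ℝ} (hderiv : ∀ x, HasDerivAt Φ (φ x) x) (hφ : ∀ x, 0 ≤ φ x)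
  (hmono : StrictMono Φ)
include hderiv hφ hmono

theorem setIntegral_image_comp_invFun {s : Set ℝ} (hs : MeasurableSet s) (f : ℝ → ℝ) :
    ∫ a in Φ '' s, f (Function.invFun Φ a) = ∫ y in s, φ y * f y := by
  rw [integral_image_eq_integral_abs_deriv_smul hs (fun x _ => (hderiv x).hasDerivWithinAt)
    hmono.injective.injOn]
  simp only [Function.leftInverse_invFun hmono.injective _, abs_of_nonneg (hφ _), smul_eq_mul]

theorem integrableOn_image_comp_invFun_iff {s : Set ℝ} (hs : MeasurableSet s) (f : ℝ → ℝ) :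
    IntegrableOn (fun a => f (Function.invFun Φ a)) (Φ '' s) ↔
      IntegrableOn (fun y => φ y * f y) s := by
  rw [integrableOn_image_iff_integrableOn_abs_deriv_smul hs
    (fun x _ => (hderiv x).hasDerivWithinAt) hmono.injective.injOn]
  simp only [Function.leftInverse_invFun hmono.injective _, abs_of_nonneg (hφ _), smul_eq_mul]

end Quantile

namespace ProbabilityTheory

variable {μ : ℝ} {v : ℝ≥0}

theorem hasDerivAt_gaussianPDFReal (x : ℝ) :
    HasDerivAt (gaussianPDFReal μ v) (-(x - μ) / v * gaussianPDFReal μ v x) x := by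
  have hexponent : HasDerivAt (fun x => -(x - μ) ^ 2 / (2 * (v : ℝ))) (-(x - μ) / v) x := by
    refine ((((hasDerivAt_id' x).sub_const μ).fun_pow 2).fun_neg.div_const _).congr_deriv ?_
    rcases eq_or_ne (v : ℝ) 0 with hv | hv
    · simp [hv]
    · field_simp
      ring
  rw [gaussianPDFReal_def]
  exact (hexponent.exp.const_mul _).congr_deriv (by ring)

theorem continuous_gaussianPDFReal : Continuous (gaussianPDFReal μ v) :=
  continuous_iff_continuousAt.2 fun x => (hasDerivAt_gaussianPDFReal x).continuousAt

theorem integrable_fun_id_gaussianReal : Integrable (fun y => y) (gaussianReal μ v) :=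
  (memLp_id_gaussianReal 1).integrable le_rfl

variable (hv : v ≠ 0)
include hv

theorem integrable_gaussianPDFReal_mul_iff {f : ℝ → ℝ} :
    Integrable (fun y => gaussianPDFReal μ v y * f y) ↔ Integrable f (gaussianReal μ v) := by
  rw [gaussianReal_of_var_ne_zero _ hv, integrable_withDensity_iff_integrable_smul'
    (measurable_gaussianPDF μ v) (ae_of_all _ fun _ => gaussianPDF_lt_top)]
  simp only [toReal_gaussianPDF, smul_eq_mul]

theorem cdf_gaussianReal_eq_setIntegral (x : ℝ) :
    cdf (gaussianReal μ v) x = ∫ y in Iic x, gaussianPDFReal μ v y := by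
  rw [cdf_eq_real, measureReal_def, gaussianReal_apply_eq_integral _ hv,
    ENNReal.toReal_ofReal
      (setIntegral_nonneg measurableSet_Iic fun y _ => gaussianPDFReal_nonneg _ _ y)]

theorem hasDerivAt_cdf_gaussianReal (x : ℝ) :
    HasDerivAt (cdf (gaussianReal μ v)) (gaussianPDFReal μ v x) x := by
  rw [show ⇑(cdf (gaussianReal μ v)) = _ from funext (cdf_gaussianReal_eq_setIntegral hv)]
  exact hasDerivAt_setIntegral_Iic (integrable_gaussianPDFReal μ v) continuous_gaussianPDFReal x

theorem strictMono_cdf_gaussianReal : StrictMono (cdf (gaussianReal μ v)) :=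
  strictMono_of_hasDerivAt_pos (hasDerivAt_cdf_gaussianReal hv) (gaussianPDFReal_pos _ _ · hv)

theorem range_cdf_gaussianReal : range (cdf (gaussianReal μ v)) = Ioo 0 1 := by
  have hmono := strictMono_cdf_gaussianReal (μ := μ) hv
  refine Subset.antisymm ?_ fun s hs => ?_
  · rintro _ ⟨x, rfl⟩
    exact ⟨(cdf_nonneg _ (x - 1)).trans_lt (hmono (sub_one_lt x)),
      (hmono (lt_add_one x)).trans_le (cdf_le_one _ _)⟩
  · refine mem_range_of_exists_le_of_exists_ge ?_ ?_ ?_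
    · exact continuous_iff_continuousAt.2 fun x => (hasDerivAt_cdf_gaussianReal hv x).continuousAt
    · exact ((tendsto_cdf_atBot _).eventually (ge_mem_nhds hs.1)).exists
    · exact ((tendsto_cdf_atTop _).eventually (le_mem_nhds hs.2)).exists

theorem image_Iio_cdf_gaussianReal (x : ℝ) :
    cdf (gaussianReal μ v) '' Iio x = Ioo 0 (cdf (gaussianReal μ v) x) := by
  have hmono := strictMono_cdf_gaussianReal (μ := μ) hv
  have hrange := range_cdf_gaussianReal hv (μ := μ)
  ext s
  constructor
  · rintro ⟨y, hy, rfl⟩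
    exact ⟨(hrange ▸ mem_range_self y : _ ∈ Ioo (0:ℝ) 1).1, hmono hy⟩
  · rintro ⟨hs0, hsx⟩
    obtain ⟨y, rfl⟩ : s ∈ range (cdf (gaussianReal μ v)) :=
      hrange ▸ ⟨hs0, hsx.trans_le (cdf_le_one _ x)⟩
    exact ⟨y, hmono.lt_iff_lt.1 hsx, rfl⟩

local notation "Ψ" => Function.invFun (cdf (gaussianReal μ v))

theorem integral_comp_invFun_cdf_gaussianReal (f : ℝ → ℝ) :
    ∫ a in Ioo 0 1, f (Ψ a) = ∫ y, f y ∂gaussianReal μ v := by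
  rw [← range_cdf_gaussianReal hv, ← image_univ,
    setIntegral_image_comp_invFun (hasDerivAt_cdf_gaussianReal hv) (gaussianPDFReal_nonneg μ v)
      (strictMono_cdf_gaussianReal hv) MeasurableSet.univ,
    setIntegral_univ, integral_gaussianReal_eq_integral_smul hv]
  rfl

theorem integrableOn_comp_invFun_cdf_gaussianReal_iff {f : ℝ → ℝ} :
    IntegrableOn (fun a => f (Ψ a)) (Ioo 0 1) ↔ Integrable f (gaussianReal μ v) := by
  rw [← range_cdf_gaussianReal hv, ← image_univ,
    integrableOn_image_comp_invFun_iff (hasDerivAt_cdf_gaussianReal hv)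
      (gaussianPDFReal_nonneg μ v) (strictMono_cdf_gaussianReal hv) MeasurableSet.univ,
    integrableOn_univ, integrable_gaussianPDFReal_mul_iff hv]

theorem integral_Iic_neg_sub_div_mul_gaussianPDFReal (x : ℝ) :
    ∫ y in Iic x, -(y - μ) / v * gaussianPDFReal μ v y = gaussianPDFReal μ v x := by
  have hint : Integrable (fun y => -(y - μ) / v * gaussianPDFReal μ v y) := by
    simp_rw [mul_comm _ (gaussianPDFReal μ v _)]
    rw [integrable_gaussianPDFReal_mul_iff hv]
    exact (integrable_fun_id_gaussianReal.sub (integrable_const μ)).neg.div_const _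
  have hderiv := fun y (_ : y ∈ Iic x) => hasDerivAt_gaussianPDFReal (μ := μ) (v := v) y
  rw [integral_Iic_of_hasDerivAt_of_tendsto' hderiv hint.integrableOn
    (tendsto_zero_of_hasDerivAt_of_integrableOn_Iic hderiv hint.integrableOn
      (integrable_gaussianPDFReal μ v).integrableOn), sub_zero]

theorem setIntegral_Ioo_neg_sub_div_invFun_cdf_gaussianReal {s : ℝ} (hs : s ∈ Ioo 0 1) :
    ∫ a in Ioo 0 s, -(Ψ a - μ) / v = gaussianPDFReal μ v (Ψ s) := by
  have hmono := strictMono_cdf_gaussianReal (μ := μ) hv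
  obtain ⟨x, rfl⟩ : s ∈ range (cdf (gaussianReal μ v)) := (range_cdf_gaussianReal hv).symm ▸ hs
  rw [Function.leftInverse_invFun hmono.injective x, ← image_Iio_cdf_gaussianReal hv,
    setIntegral_image_comp_invFun (hasDerivAt_cdf_gaussianReal hv) (gaussianPDFReal_nonneg μ v)
      hmono measurableSet_Iio (fun y => -(y - μ) / v),
    setIntegral_congr_set Iio_ae_eq_Iic, ← integral_Iic_neg_sub_div_mul_gaussianPDFReal hv x]
  simp_rw [mul_comm]

theorem integral_Ioo_neg_sub_div_invFun_cdf_gaussianReal :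
    ∫ a in Ioo 0 1, -(Ψ a - μ) / v = 0 := by
  rw [integral_comp_invFun_cdf_gaussianReal hv (fun y => -(y - μ) / v), integral_div, integral_neg,
    integral_sub integrable_fun_id_gaussianReal (integrable_const μ)]
  simp

theorem integrableOn_neg_sub_div_invFun_cdf_gaussianReal :
    IntegrableOn (fun a => -(Ψ a - μ) / v) (Ioo 0 1) :=
  (integrableOn_comp_invFun_cdf_gaussianReal_iff hv (f := fun y => -(y - μ) / v)).2 <|
    (integrable_fun_id_gaussianReal.sub (integrable_const μ)).neg.div_const _

theorem integrableOn_sq_neg_sub_div_invFun_cdf_gaussianReal :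
    IntegrableOn (fun a => (-(Ψ a - μ) / v) ^ 2) (Ioo 0 1) := by
  rw [integrableOn_comp_invFun_cdf_gaussianReal_iff hv (f := fun y => (-(y - μ) / v) ^ 2)]
  simp_rw [neg_div, neg_sq, div_pow]
  exact ((memLp_id_gaussianReal 2).sub (memLp_const μ)).integrable_sq.div_const _

theorem integral_Ioo_sq_neg_sub_div_invFun_cdf_gaussianReal :
    ∫ a in Ioo 0 1, (-(Ψ a - μ) / v) ^ 2 = 1 / v := by
  have hvar : ∫ y, (y - μ) ^ 2 ∂gaussianReal μ v = v := by
    simpa [variance_eq_integral measurable_id'.aemeasurable] using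
      variance_fun_id_gaussianReal (μ := μ) (v := v)
  rw [integral_comp_invFun_cdf_gaussianReal hv (fun y => (-(y - μ) / v) ^ 2)]
  simp_rw [neg_div, neg_sq, div_pow]
  rw [integral_div, hvar]
  field_simp [NNReal.coe_ne_zero.2 hv]

end ProbabilityTheory

section LayerCake

variable {α : Type*} [MeasurableSpace α] {μ : Measure α}

theorem ofReal_sq_eq_two_mul_lintegral (x : ℝ) :
    ENNReal.ofReal (x ^ 2) = 2 * ∫⁻ t in Ioi 0, ENNReal.ofReal (|x| - t) := by
  have hb := abs_nonneg x
  have htail : ∫⁻ t in Ioi |x|, ENNReal.ofReal (|x| - t) = 0 := by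
    rw [setLIntegral_congr_fun measurableSet_Ioi
      (fun t ht => ENNReal.ofReal_of_nonpos (sub_nonpos.2 (le_of_lt ht))), lintegral_zero]
  have hbody : ∫⁻ t in Ioc 0 |x|, ENNReal.ofReal (|x| - t) = ENNReal.ofReal (|x| ^ 2 / 2) := by
    rw [← ofReal_integral_eq_lintegral_ofReal
      (by fun_prop : Continuous fun t => |x| - t).integrableOn_Ioc
      ((ae_restrict_mem measurableSet_Ioc).mono fun t ht => sub_nonneg.2 ht.2),
      ← intervalIntegral.integral_of_le hb,
      intervalIntegral.integral_comp_sub_left (fun t => t), sub_self, sub_zero, integral_id]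
    norm_num
  rw [← Ioc_union_Ioi_eq_Ioi hb, lintegral_union measurableSet_Ioi (Ioc_disjoint_Ioi le_rfl),
    htail, add_zero, hbody, ← ENNReal.ofReal_ofNat 2, ← ENNReal.ofReal_mul zero_le_two, sq_abs]
  ring_nf

theorem lintegral_sq_le_of_lintegral_abs_sub_le [SFinite μ] {f g : α → ℝ} (hf : AEMeasurable f μ)
    (hg : AEMeasurable g μ)
    (hfg : ∀ t > 0, ∫⁻ a, ENNReal.ofReal (|f a| - t) ∂μ ≤ ∫⁻ a, ENNReal.ofReal (|g a| - t) ∂μ) :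
    ∫⁻ a, ENNReal.ofReal (f a ^ 2) ∂μ ≤ ∫⁻ a, ENNReal.ofReal (g a ^ 2) ∂μ := by
  have hlayers : ∀ {k : α → ℝ}, AEMeasurable k μ → ∫⁻ a, ENNReal.ofReal (k a ^ 2) ∂μ =
      2 * ∫⁻ t in Ioi 0, ∫⁻ a, ENNReal.ofReal (|k a| - t) ∂μ := by
    intro k hk
    simp_rw [ofReal_sq_eq_two_mul_lintegral]
    rw [lintegral_const_mul' _ _ ENNReal.ofNat_ne_top, lintegral_lintegral_swap]
    exact ENNReal.measurable_ofReal.comp_aemeasurable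
      (hk.comp_fst.abs.sub measurable_snd.aemeasurable)
  rw [hlayers hf, hlayers hg]
  gcongr 2 * ?_
  exact setLIntegral_mono' measurableSet_Ioi hfg

theorem lintegral_ofReal_abs_sub_eq [IsFiniteMeasure μ] {f : α → ℝ} (hf : Integrable f μ) {t : ℝ}
    (ht : 0 ≤ t) : ∫⁻ a, ENNReal.ofReal (|f a| - t) ∂μ =
      ENNReal.ofReal (∫ a, max (f a - t) 0 ∂μ + ∫ a, max (-f a - t) 0 ∂μ) := by
  have hpos : Integrable (fun a => max (f a - t) 0) μ := (hf.sub (integrable_const t)).pos_part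
  have hneg : Integrable (fun a => max (-f a - t) 0) μ :=
    (hf.neg.sub (integrable_const t)).pos_part
  have hsum : Integrable (fun a => max (f a - t) 0 + max (-f a - t) 0) μ := hpos.add hneg
  rw [← integral_add hpos hneg,
    ofReal_integral_eq_lintegral_ofReal hsum (ae_of_all _ fun a => by positivity)]
  refine lintegral_congr fun a => ?_
  have hsplit : max (|f a| - t) 0 = max (f a - t) 0 + max (-f a - t) 0 := by
    rcases abs_cases (f a) with ⟨h, _⟩ | ⟨h, _⟩ <;> rw [h] <;> simp only [max_def] <;> split_ifs <;>
      linarith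
  rw [← hsplit, ENNReal.ofReal_max, ENNReal.ofReal_zero, max_zero]

end LayerCake

section Majorization

variable {f g : ℝ → ℝ}

theorem exists_ae_max_sub_eq_indicator_of_antitoneOn (hf : AntitoneOn f (Ioo 0 1)) (t : ℝ) :
    ∃ u ∈ Icc (0 : ℝ) 1, (fun a => max (f a - t) 0) =ᵐ[volume.restrict (Ioo 0 1)]
      (Ioo 0 u).indicator (fun a => f a - t) := by
  set S := insert 0 {a ∈ Ioo (0 : ℝ) 1 | t < f a}
  have hS : ∀ b ∈ S, b ≤ 1 := by
    rintro b (rfl | hb)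
    exacts [zero_le_one, hb.1.2.le]
  have hbdd : BddAbove S := ⟨1, hS⟩
  refine ⟨sSup S, ⟨le_csSup hbdd (mem_insert 0 _), csSup_le (insert_nonempty 0 _) hS⟩, ?_⟩
  filter_upwards [ae_restrict_mem measurableSet_Ioo, Measure.ae_ne _ (sSup S)] with a ha hne
  rcases hne.lt_or_gt with hlt | hgt
  · obtain ⟨b, hb, hab⟩ := exists_lt_of_lt_csSup (insert_nonempty 0 _) hlt
    have hta : t < f a := by
      rcases hb with rfl | hb
      · exact absurd ha.1 hab.not_gt
      · exact hb.2.trans_le (hf ha hb.1 hab.le)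
    rw [indicator_of_mem (show a ∈ Ioo 0 (sSup S) from ⟨ha.1, hlt⟩), max_eq_left (by linarith)]
  · have hat : f a ≤ t :=
      not_lt.1 fun h => hgt.not_ge (le_csSup hbdd (mem_insert_of_mem _ (mem_sep ha h)))
    rw [indicator_of_notMem fun h => hgt.not_gt h.2, max_eq_right (by linarith)]

section Layers

variable (hf_anti : AntitoneOn f (Ioo 0 1)) (hf : IntegrableOn f (Ioo 0 1))
  (hg : IntegrableOn g (Ioo 0 1))
  (hle : ∀ u ∈ Icc (0 : ℝ) 1, ∫ a in Ioo 0 u, f a ≤ ∫ a in Ioo 0 u, g a)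
include hf_anti hf hg hle

theorem setIntegral_max_sub_le_of_antitoneOn (t : ℝ) :
    ∫ a in Ioo 0 1, max (f a - t) 0 ≤ ∫ a in Ioo 0 1, max (g a - t) 0 := by
  obtain ⟨u, hu, hae⟩ := exists_ae_max_sub_eq_indicator_of_antitoneOn hf_anti t
  have hsub : Ioo 0 u ⊆ Ioo (0 : ℝ) 1 := Ioo_subset_Ioo_right hu.2
  have hconst : IntegrableOn (fun _ => t) (Ioo 0 u) := integrableOn_const measure_Ioo_lt_top.ne
  have hg_sub : IntegrableOn (fun a => g a - t) (Ioo 0 u) := (hg.mono_set hsub).sub hconst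
  calc ∫ a in Ioo 0 1, max (f a - t) 0 = ∫ a in Ioo 0 u, (f a - t) := by
        rw [integral_congr_ae hae, integral_indicator measurableSet_Ioo,
          Measure.restrict_restrict measurableSet_Ioo, inter_eq_self_of_subset_left hsub]
    _ ≤ ∫ a in Ioo 0 u, (g a - t) := by
        rw [integral_sub (hf.mono_set hsub) hconst, integral_sub (hg.mono_set hsub) hconst]
        exact sub_le_sub_right (hle u hu) _
    _ ≤ ∫ a in Ioo 0 u, max (g a - t) 0 :=
        setIntegral_mono hg_sub hg_sub.pos_part fun a => le_max_left _ _
    _ ≤ ∫ a in Ioo 0 1, max (g a - t) 0 :=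
        setIntegral_mono_set (hg.sub (integrableOn_const measure_Ioo_lt_top.ne)).pos_part
          (ae_of_all _ fun a => le_max_right _ _) hsub.eventuallyLE

theorem setIntegral_max_neg_sub_le_of_antitoneOn
    (heq : ∫ a in Ioo 0 1, f a = ∫ a in Ioo 0 1, g a) (t : ℝ) :
    ∫ a in Ioo 0 1, max (-f a - t) 0 ≤ ∫ a in Ioo 0 1, max (-g a - t) 0 := by
  have hconst {c : ℝ} : IntegrableOn (fun _ => c) (Ioo (0 : ℝ) 1) :=
    integrableOn_const measure_Ioo_lt_top.ne
  have hreflect {k : ℝ → ℝ} (hk : IntegrableOn k (Ioo 0 1)) : ∫ a in Ioo 0 1, max (-k a - t) 0 =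
      (∫ a in Ioo 0 1, max (k a - -t) 0) - ∫ a in Ioo 0 1, (k a + t) := by
    have hpos : IntegrableOn (fun a => max (k a - -t) 0) (Ioo 0 1) := (hk.sub hconst).pos_part
    rw [← integral_sub hpos (g := fun a => k a + t) (hk.add hconst)]
    refine integral_congr_ae (ae_of_all _ fun a => ?_)
    simp only [max_def]
    split_ifs <;> linarith
  have hshift : ∫ a in Ioo 0 1, (f a + t) = ∫ a in Ioo 0 1, (g a + t) := by
    rw [integral_add hf hconst, integral_add hg hconst, heq]
  rw [hreflect hf, hreflect hg, hshift]
  exact sub_le_sub_right (setIntegral_max_sub_le_of_antitoneOn hf_anti hf hg hle (-t)) _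

end Layers

theorem setIntegral_sq_le_of_antitoneOn (hf_anti : AntitoneOn f (Ioo 0 1))
    (hg : IntegrableOn g (Ioo 0 1)) (hg2 : IntegrableOn (fun a => g a ^ 2) (Ioo 0 1))
    (hle : ∀ u ∈ Ioo (0 : ℝ) 1, ∫ a in Ioo 0 u, f a ≤ ∫ a in Ioo 0 u, g a)
    (heq : ∫ a in Ioo 0 1, f a = ∫ a in Ioo 0 1, g a) :
    ∫ a in Ioo 0 1, f a ^ 2 ≤ ∫ a in Ioo 0 1, g a ^ 2 := by
  by_cases hf2 : IntegrableOn (fun a => f a ^ 2) (Ioo 0 1)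
  swap
  · rw [integral_undef hf2]
    exact setIntegral_nonneg measurableSet_Ioo fun a _ => sq_nonneg (g a)
  have hf : IntegrableOn f (Ioo 0 1) :=
    ((memLp_two_iff_integrable_sq (aemeasurable_restrict_of_antitoneOn measurableSet_Ioo
      hf_anti).aestronglyMeasurable).2 hf2).integrable one_le_two
  have hle_Icc : ∀ u ∈ Icc (0 : ℝ) 1, ∫ a in Ioo 0 u, f a ≤ ∫ a in Ioo 0 u, g a := by
    rintro u ⟨hu0, hu1⟩
    rcases hu0.eq_or_lt with rfl | hu0
    · simp
    rcases hu1.eq_or_lt with rfl | hu1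
    · exact heq.le
    exact hle u ⟨hu0, hu1⟩
  have hlayers : ∀ t > 0, ∫⁻ a in Ioo 0 1, ENNReal.ofReal (|f a| - t) ≤
      ∫⁻ a in Ioo 0 1, ENNReal.ofReal (|g a| - t) := fun t ht => by
    rw [lintegral_ofReal_abs_sub_eq hf ht.le, lintegral_ofReal_abs_sub_eq hg ht.le]
    exact ENNReal.ofReal_le_ofReal (add_le_add
      (setIntegral_max_sub_le_of_antitoneOn hf_anti hf hg hle_Icc t)
      (setIntegral_max_neg_sub_le_of_antitoneOn hf_anti hf hg hle_Icc heq t))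
  rw [integral_eq_lintegral_of_nonneg_ae (ae_of_all _ fun a => sq_nonneg (f a)) hf2.1,
    integral_eq_lintegral_of_nonneg_ae (ae_of_all _ fun a => sq_nonneg (g a)) hg2.1]
  exact ENNReal.toReal_mono hg2.lintegral_lt_top.ne
    (lintegral_sq_le_of_lintegral_abs_sub_le hf.aemeasurable hg.aemeasurable hlayers)

end Majorization

theorem L2_bound_from_rearrangement_general {M : Type*} [MeasurableSpace M]
    (ν : Measure M) (q : M → ℝ)
    (h : ℝ → ℝ) (hmono : AntitoneOn h (Set.Ioo 0 1))
    (hequi : ∫ x, q x ^ 2 ∂ν = ∫ a in (0:ℝ)..1, h a ^ 2)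
    (Φ F H : ℝ → ℝ)
    (hΦ : ∀ x : ℝ, Φ x = (Real.sqrt (4 * Real.pi))⁻¹ * ∫ y in Set.Iic x, Real.exp (-y ^ 2 / 4))
    (hF : ∀ s : ℝ, F s = deriv Φ (Function.invFun Φ s))
    (hH : ∀ a : ℝ, H a = ∫ t in (0:ℝ)..a, h t)
    (hH1 : H 1 = 0)
    (hHF : ∀ a ∈ Set.Ioo (0:ℝ) 1, H a ≤ F a) :
    (∫ a in (0:ℝ)..1, h a ^ 2) ≤ 1/2 ∧ (∫ x, q x ^ 2 ∂ν) ≤ 1/2 := by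
  have hv : (2 : ℝ≥0) ≠ 0 := two_ne_zero
  obtain rfl : Φ = cdf (gaussianReal 0 2) := funext fun x => by
    rw [hΦ, cdf_gaussianReal_eq_setIntegral hv, ← integral_const_mul]
    congr with y
    simp only [gaussianPDFReal_def, NNReal.coe_ofNat, sub_zero]
    ring_nf
  have hH_eq : ∀ u ∈ Icc (0 : ℝ) 1, H u = ∫ a in Ioo 0 u, h a := fun u hu => by
    rw [hH, intervalIntegral.integral_of_le hu.1, integral_Ioc_eq_integral_Ioo]
  have hsq : ∫ a in Ioo 0 1, h a ^ 2 ≤ 1 / 2 := by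
    refine (setIntegral_sq_le_of_antitoneOn hmono
      (integrableOn_neg_sub_div_invFun_cdf_gaussianReal (μ := 0) hv)
      (integrableOn_sq_neg_sub_div_invFun_cdf_gaussianReal (μ := 0) hv)
      (fun u hu => ?_) ?_).trans_eq ?_
    · rw [← hH_eq u (Ioo_subset_Icc_self hu),
        setIntegral_Ioo_neg_sub_div_invFun_cdf_gaussianReal hv hu,
        ← (hasDerivAt_cdf_gaussianReal hv _).deriv, ← hF]
      exact hHF u hu
    · rw [← hH_eq 1 (right_mem_Icc.2 zero_le_one), hH1,
        integral_Ioo_neg_sub_div_invFun_cdf_gaussianReal hv]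
    · rw [integral_Ioo_sq_neg_sub_div_invFun_cdf_gaussianReal hv, NNReal.coe_ofNat]
  rw [intervalIntegral.integral_of_le zero_le_one, integral_Ioc_eq_integral_Ioo] at hequi ⊢
  exact ⟨hsq, hequi ▸ hsq⟩

/-- Bamler's L² estimate: if q has ν-mean zero, h is its decreasing rearrangement on
(0,1) (so ∫ q² dν = ∫_0^1 h²), and H(a) = ∫_0^a h satisfies H(0) = H(1) = 0, H concave,
and H ≤ F on (0,1) with F(s) = Φ'(Φ⁻¹(s)), then ∫_0^1 h² ≤ 1/2 and ∫ q² dν ≤ 1/2. -/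
theorem L2_bound_from_rearrangement {M : Type*} [MeasurableSpace M]
    (ν : Measure M) [IsProbabilityMeasure ν] (q : M → ℝ)
    (hq0 : ∫ x, q x ∂ν = 0)
    (h : ℝ → ℝ) (hmono : AntitoneOn h (Set.Ioo 0 1))
    (hequi : ∫ x, q x ^ 2 ∂ν = ∫ a in (0:ℝ)..1, h a ^ 2)
    (Φ F H : ℝ → ℝ)
    (hΦ : ∀ x : ℝ, Φ x = (Real.sqrt (4 * Real.pi))⁻¹ * ∫ y in Set.Iic x, Real.exp (-y ^ 2 / 4))
    (hF : ∀ s : ℝ, F s = deriv Φ (Function.invFun Φ s))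
    (hH : ∀ a : ℝ, H a = ∫ t in (0:ℝ)..a, h t)
    (hH0 : H 0 = 0) (hH1 : H 1 = 0)
    (hconc : ConcaveOn ℝ (Set.Icc 0 1) H)
    (hHF : ∀ a ∈ Set.Ioo (0:ℝ) 1, H a ≤ F a) :
    (∫ a in (0:ℝ)..1, h a ^ 2) ≤ 1/2 ∧ (∫ x, q x ^ 2 ∂ν) ≤ 1/2 :=
  L2_bound_from_rearrangement_general ν q h hmono hequi Φ F H hΦ hF hH hH1 hHF
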